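/- Let R be a finite non-commutative ring of order n with Z(R) = {0}. Then γ_s(Γ̄(R)) ≠ n - 1 and γ_s(Γ̄(R)) ≠ n - 5. -/

import Mathlib

/-!
Write `n = |R|` and `C(v)` for the centralizer of `v`. The vertices of `Γ̄(R)` are the `n - 1`
nonzero elements, the closed neighbourhood of `v` is `v` together with the elements not commuting
with `v`, of size `n + 1 - |C(v)|`, and `C(v)` is a proper additive subgroup containing `0` and
`v`, so `2 ≤ |C(v)| ≤ n / 2`. Putting `-1` on a set `S` of vertices and `1` elsewhere is signed
dominating as soon as every closed neighbourhood meets `S` in less than half of its vertices.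
One vertex always works, so `γₛ ≤ n - 3`. Lagrange's theorem, together with the commutativity of
rings of order `pq`, leaves only `n = 4` or `n ≥ 8`. For `n = 4` all centralizers are `{0, v}`,
`Γ̄(R)` is complete and `γₛ ≥ 1 = n - 3`. For `n ≥ 8` three vertices work, so `γₛ ≤ n - 7`: any
three if all `|C(v)| ≤ n - 6`; otherwise `n = 8` and `|C(w)| = 4` for some `w`, and we take
`S = C(w) \ {0}`; a vertex `v` with `|C(v)| > 2` then commutes with some element of `S` other than
itself, because `|C(v)| |C(w)| > n` forces `C(v) ∩ C(w) ≠ 0`.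
-/

open scoped Classical

noncomputable section

/-- The commuting graph of a (non-unital, possibly non-commutative) ring `R`:
vertices are the non-central elements, and two distinct vertices are adjacent
iff they commute. -/
def commutingGraph (R : Type*) [NonUnitalRing R] :
    SimpleGraph {x : R // x ∉ Set.center R} where
  Adj a b := a ≠ b ∧ (a : R) * b = (b : R) * a
  symm := ⟨by rintro a b ⟨h1, h2⟩; exact ⟨h1.symm, h2.symm⟩⟩
  loopless := ⟨by rintro a ⟨h, -⟩; exact h rfl⟩

/-- A dominating set: every vertex not in `D` is adjacent to some vertex of `D`. -/
def SimpleGraph.IsDominatingSet {V : Type*} (G : SimpleGraph V) (D : Finset V) : Prop :=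
  ∀ v, v ∉ D → ∃ u ∈ D, G.Adj u v

/-- The domination number: the minimum cardinality of a dominating set. -/
noncomputable def SimpleGraph.dominationNumber {V : Type*} [Fintype V] (G : SimpleGraph V) : ℕ :=
  sInf {n | ∃ D : Finset V, G.IsDominatingSet D ∧ D.card = n}

/-- The signed domination number: the minimum total weight of a function
`f : V → {-1, 1}` whose sum over every closed neighbourhood is at least `1`. -/
noncomputable def SimpleGraph.signedDominationNumber {V : Type*} [Fintype V]
    (G : SimpleGraph V) : ℤ :=
  sInf {w : ℤ | ∃ f : V → ℤ, (∀ v, f v = 1 ∨ f v = -1) ∧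
    (∀ v : V, 1 ≤ ∑ u ∈ Finset.univ.filter (fun u => G.Adj v u ∨ u = v), f u) ∧
    w = ∑ v, f v}

/-- Underlying type of the ring `E`. -/
def Ering : Type := ZMod 2 × ZMod 2

instance : Fintype Ering := inferInstanceAs (Fintype (ZMod 2 × ZMod 2))
instance : DecidableEq Ering := inferInstanceAs (DecidableEq (ZMod 2 × ZMod 2))
instance : AddCommGroup Ering := inferInstanceAs (AddCommGroup (ZMod 2 × ZMod 2))
instance : Mul Ering := ⟨fun a b => (b.1 * a.1, b.1 * a.2)⟩

/-- `E = ⟨x,y : 2x=2y=0, x²=x, y²=y, xy=x, yx=y⟩`, realized on `ZMod 2 × ZMod 2`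
with `x = (1,0)`, `y = (1,1)` and multiplication `a * b = (b₁a₁, b₁a₂)`. -/
instance : NonUnitalRing Ering :=
  { (inferInstanceAs (AddCommGroup Ering) : AddCommGroup Ering), (inferInstanceAs (Mul Ering) : Mul Ering) with
    left_distrib := by decide
    right_distrib := by decide
    zero_mul := by decide
    mul_zero := by decide
    mul_assoc := by decide }

/-- Underlying type of the ring `F`. -/
def Fring : Type := ZMod 2 × ZMod 2

instance : Fintype Fring := inferInstanceAs (Fintype (ZMod 2 × ZMod 2))
instance : DecidableEq Fring := inferInstanceAs (DecidableEq (ZMod 2 × ZMod 2))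
instance : AddCommGroup Fring := inferInstanceAs (AddCommGroup (ZMod 2 × ZMod 2))
instance : Mul Fring := ⟨fun a b => (a.1 * b.1, a.1 * b.2)⟩

/-- `F = ⟨x,y : 2x=2y=0, x²=x, y²=y, xy=y, yx=x⟩`, realized on `ZMod 2 × ZMod 2`
with `x = (1,0)`, `y = (1,1)` and multiplication `a * b = (a₁b₁, a₁b₂)`. -/
instance : NonUnitalRing Fring :=
  { (inferInstanceAs (AddCommGroup Fring) : AddCommGroup Fring), (inferInstanceAs (Mul Fring) : Mul Fring) with
    left_distrib := by decide
    right_distrib := by decide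
    zero_mul := by decide
    mul_zero := by decide
    mul_assoc := by decide }

open Finset

theorem Finset.sum_ite_mem_neg_one_one {α : Type*} (T S : Finset α) :
    ∑ u ∈ T, (if u ∈ S then -1 else 1 : ℤ) = #T - 2 * #(T ∩ S) := by
  have h := T.card_filter_add_card_filter_not (· ∈ S)
  rw [filter_mem_eq_inter] at h
  simp only [sum_ite, sum_const, filter_mem_eq_inter, nsmul_eq_mul, mul_neg, mul_one]
  omega

namespace SimpleGraph

variable {V : Type*} [Fintype V] (G : SimpleGraph V)

def closedNeighborFinset (v : V) : Finset V :=
  univ.filter fun u => G.Adj v u ∨ u = v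

theorem mem_closedNeighborFinset_self (v : V) : v ∈ G.closedNeighborFinset v := by
  simp [closedNeighborFinset]

theorem signedDominationNumber_le {f : V → ℤ} (hf : ∀ v, f v = 1 ∨ f v = -1)
    (hdom : ∀ v, 1 ≤ ∑ u ∈ G.closedNeighborFinset v, f u) :
    G.signedDominationNumber ≤ ∑ v, f v := by
  refine csInf_le ⟨-Fintype.card V, ?_⟩ ⟨f, hf, hdom, rfl⟩
  rintro _ ⟨g, hg, -, rfl⟩
  have hle : ∀ v ∈ univ, (-1 : ℤ) ≤ g v := fun v _ => by rcases hg v with h | h <;> simp [h]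
  simpa using sum_le_sum hle

theorem one_le_signedDominationNumber_of_closedNeighborFinset_eq_univ {v : V}
    (hv : G.closedNeighborFinset v = univ) : 1 ≤ G.signedDominationNumber := by
  refine le_csInf ⟨_, fun _ => 1, fun _ => Or.inl rfl, fun w => ?_, rfl⟩ ?_
  · change 1 ≤ ∑ u ∈ G.closedNeighborFinset w, (1 : ℤ)
    simpa using card_pos.2 ⟨w, G.mem_closedNeighborFinset_self w⟩
  · rintro _ ⟨f, -, hdom, rfl⟩
    have h : 1 ≤ ∑ u ∈ G.closedNeighborFinset v, f u := hdom v
    rwa [hv] at h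

theorem signedDominationNumber_le_of_finset (S : Finset V)
    (hS : ∀ v, 2 * #(G.closedNeighborFinset v ∩ S) < #(G.closedNeighborFinset v)) :
    G.signedDominationNumber ≤ Fintype.card V - 2 * #S := by
  have h := G.signedDominationNumber_le (f := fun u => if u ∈ S then -1 else 1)
    (fun u => by by_cases hu : u ∈ S <;> simp [hu])
    (fun v => by rw [Finset.sum_ite_mem_neg_one_one]; have := hS v; omega)
  rwa [Finset.sum_ite_mem_neg_one_one, univ_inter, card_univ] at h

theorem signedDominationNumber_le_card_sub_two (v₀ : V)
    (h : ∀ v, 3 ≤ #(G.closedNeighborFinset v)) :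
    G.signedDominationNumber ≤ Fintype.card V - 2 := by
  have := G.signedDominationNumber_le_of_finset {v₀} fun v => by
    have := card_le_card (inter_subset_right (s₁ := G.closedNeighborFinset v) (s₂ := {v₀}))
    have := h v
    rw [card_singleton] at *
    omega
  rwa [card_singleton] at this

theorem signedDominationNumber_le_of_card_eq_three {S : Finset V} (hS : #S = 3)
    (h : ∀ v, 7 ≤ #(G.closedNeighborFinset v) ∨
      5 ≤ #(G.closedNeighborFinset v) ∧ ¬ S ⊆ G.closedNeighborFinset v) :
    G.signedDominationNumber ≤ Fintype.card V - 6 := by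
  have := G.signedDominationNumber_le_of_finset S fun v => by
    have hle : #(G.closedNeighborFinset v ∩ S) ≤ 3 := hS ▸ card_le_card inter_subset_right
    rcases h v with h7 | ⟨h5, hsub⟩
    · omega
    · have : #(G.closedNeighborFinset v ∩ S) < #S :=
        card_lt_card ⟨inter_subset_right, fun h => hsub (h.trans inter_subset_left)⟩
      omega
  omega

end SimpleGraph

theorem AddSubgroup.card_mul_card_le_of_disjoint {G : Type*} [AddGroup G] [Finite G]
    {H K : AddSubgroup G} (h : Disjoint H K) : Nat.card H * Nat.card K ≤ Nat.card G := by
  rw [← Nat.card_prod]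
  exact Nat.card_le_card_of_injective _ (AddSubgroup.add_injective_of_disjoint h)

theorem isAddCyclic_of_card_eq_prime_mul_prime {A : Type*} [AddCommGroup A] [Finite A]
    {p q : ℕ} (hp : p.Prime) (hq : q.Prime) (hpq : p ≠ q) (hcard : Nat.card A = p * q) :
    IsAddCyclic A := by
  have := Fact.mk hp
  have := Fact.mk hq
  obtain ⟨a, ha⟩ := exists_prime_addOrderOf_dvd_card' p (hcard ▸ dvd_mul_right p q)
  obtain ⟨b, hb⟩ := exists_prime_addOrderOf_dvd_card' q (hcard ▸ dvd_mul_left q p)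
  refine isAddCyclic_of_addOrderOf_eq_card (a + b) ?_
  rw [(AddCommute.all a b).addOrderOf_add_eq_mul_addOrderOf_of_coprime
    (ha ▸ hb ▸ (Nat.coprime_primes hp hq).2 hpq), ha, hb, hcard]

section Centralizer

variable {R : Type*} [NonUnitalRing R]

theorem mul_comm_of_isAddCyclic [IsAddCyclic R] (x y : R) : x * y = y * x := by
  obtain ⟨g, hg⟩ := IsAddCyclic.exists_generator (α := R)
  obtain ⟨k, rfl⟩ := AddSubgroup.mem_zmultiples_iff.1 (hg x)
  obtain ⟨l, rfl⟩ := AddSubgroup.mem_zmultiples_iff.1 (hg y)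
  rw [smul_mul_assoc, smul_mul_assoc, mul_smul_comm, mul_smul_comm, smul_comm]

theorem card_ne_prime_mul_prime_of_notMem_center [Finite R] {x : R} (hx : x ∉ Set.center R)
    {p q : ℕ} (hp : p.Prime) (hq : q.Prime) (hpq : p ≠ q) : Nat.card R ≠ p * q := fun hcard =>
  have := isAddCyclic_of_card_eq_prime_mul_prime hp hq hpq hcard
  hx <| Semigroup.mem_center_iff.2 fun g => mul_comm_of_isAddCyclic g x

theorem ne_zero_of_notMem_center {x : R} (hx : x ∉ Set.center R) : x ≠ 0 :=
  fun h => hx (h ▸ Set.zero_mem_center)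

def centralizerAddSubgroup (x : R) : AddSubgroup R :=
  (NonUnitalSubring.centralizer {x}).toAddSubgroup

@[simp]
theorem mem_centralizerAddSubgroup {x y : R} : y ∈ centralizerAddSubgroup x ↔ x * y = y * x := by
  simp [centralizerAddSubgroup, NonUnitalSubring.mem_centralizer_iff]

theorem centralizerAddSubgroup_ne_top {x : R} (hx : x ∉ Set.center R) :
    centralizerAddSubgroup x ≠ ⊤ := fun h =>
  hx <| Semigroup.mem_center_iff.2 fun g =>
    (mem_centralizerAddSubgroup.1 (h ▸ AddSubgroup.mem_top g)).symm

theorem card_centralizerAddSubgroup_dvd (x : R) :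
    Nat.card (centralizerAddSubgroup x) ∣ Nat.card R :=
  AddSubgroup.card_addSubgroup_dvd_card _

variable [Finite R]

theorem two_le_card_centralizerAddSubgroup {x : R} (hx : x ≠ 0) :
    2 ≤ Nat.card (centralizerAddSubgroup x) :=
  (AddSubgroup.one_lt_card_iff_ne_bot _).2 fun h =>
    hx <| (AddSubgroup.mem_bot).1 (h ▸ mem_centralizerAddSubgroup.2 rfl)

theorem two_mul_card_centralizerAddSubgroup_le {x : R} (hx : x ∉ Set.center R) :
    2 * Nat.card (centralizerAddSubgroup x) ≤ Nat.card R := by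
  have h1 : (centralizerAddSubgroup x).index ≠ 1 :=
    AddSubgroup.index_eq_one.not.2 (centralizerAddSubgroup_ne_top hx)
  have h0 : (centralizerAddSubgroup x).index ≠ 0 := AddSubgroup.index_ne_zero_of_finite
  rw [← (centralizerAddSubgroup x).card_mul_index, mul_comm]
  exact Nat.mul_le_mul_left _ (show 2 ≤ (centralizerAddSubgroup x).index by omega)

theorem card_eq_four_or_eight_le {x : R} (hx : x ∉ Set.center R) :
    Nat.card R = 4 ∨ 8 ≤ Nat.card R := by
  have h2 := two_le_card_centralizerAddSubgroup (ne_zero_of_notMem_center hx)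
  have hle := two_mul_card_centralizerAddSubgroup_le hx
  have h6 := card_ne_prime_mul_prime_of_notMem_center hx Nat.prime_two Nat.prime_three (by norm_num)
  obtain ⟨k, hk⟩ := card_centralizerAddSubgroup_dvd x
  generalize Nat.card (centralizerAddSubgroup x) = c at *
  by_contra! h
  have : c ≤ 3 := by omega
  interval_cases c <;> omega

theorem card_eq_eight_of_lt_card_centralizerAddSubgroup_add_six {x : R} (hx : x ∉ Set.center R)
    (h8 : 8 ≤ Nat.card R) (hlt : Nat.card R < Nat.card (centralizerAddSubgroup x) + 6) :
    Nat.card R = 8 ∧ Nat.card (centralizerAddSubgroup x) = 4 := by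
  have hle := two_mul_card_centralizerAddSubgroup_le hx
  have h10 := card_ne_prime_mul_prime_of_notMem_center hx Nat.prime_two (by norm_num : (5).Prime)
    (by norm_num)
  obtain ⟨k, hk⟩ := card_centralizerAddSubgroup_dvd x
  generalize Nat.card (centralizerAddSubgroup x) = c at *
  have : c ≤ 5 := by omega
  interval_cases c <;> omega

theorem exists_ne_mul_comm_of_card_centralizerAddSubgroup {v w : R} (hw : w ≠ 0)
    (hcard : Nat.card R = 8) (hw4 : Nat.card (centralizerAddSubgroup w) = 4)
    (hv : 2 < Nat.card (centralizerAddSubgroup v)) :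
    ∃ s, s ≠ 0 ∧ w * s = s * w ∧ s ≠ v ∧ v * s = s * v := by
  by_cases hvw : w * v = v * w
  · obtain rfl | hne := eq_or_ne v w
    · have hlt : ({0, v} : Set R).ncard < (centralizerAddSubgroup v : Set R).ncard := by
        rw [show (centralizerAddSubgroup v : Set R).ncard = 4 from
          (Nat.card_coe_set_eq _).symm.trans hw4]
        exact (Set.ncard_insert_le _ _).trans_lt (by simp)
      obtain ⟨s, hs, hs0v⟩ := Set.exists_mem_notMem_of_ncard_lt_ncard hlt (Set.toFinite _)
      simp only [Set.mem_insert_iff, Set.mem_singleton_iff, not_or] at hs0v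
      have hs : v * s = s * v := mem_centralizerAddSubgroup.1 hs
      exact ⟨s, hs0v.1, hs, hs0v.2, hs⟩
    · exact ⟨w, hw, rfl, hne.symm, hvw.symm⟩
  · have hmeet : ¬ Disjoint (centralizerAddSubgroup v) (centralizerAddSubgroup w) := fun h => by
      have := AddSubgroup.card_mul_card_le_of_disjoint h
      rw [hw4, hcard] at this
      omega
    obtain ⟨s, hsv, hsw, hs0⟩ : ∃ s, v * s = s * v ∧ w * s = s * w ∧ s ≠ 0 := by
      simpa [AddSubgroup.disjoint_def] using hmeet
    exact ⟨s, hs0, hsw, fun h => hvw (h ▸ hsw), hsv⟩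

end Centralizer

section CommutingGraph

variable {R : Type*} [NonUnitalRing R]

theorem compl_commutingGraph_adj {u v : {x : R // x ∉ Set.center R}} :
    (commutingGraph R)ᶜ.Adj u v ↔ (u : R) * v ≠ v * u := by
  simp only [SimpleGraph.compl_adj, commutingGraph]
  exact ⟨fun ⟨hne, h⟩ hc => h ⟨hne, hc⟩, fun h => ⟨fun e => h (e ▸ rfl), fun hc => h hc.2⟩⟩

variable [Fintype R]

theorem mem_closedNeighborFinset_compl_commutingGraph {u v : {x : R // x ∉ Set.center R}} :
    u ∈ (commutingGraph R)ᶜ.closedNeighborFinset v ↔ u = v ∨ (v : R) * u ≠ u * v := by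
  simp only [SimpleGraph.closedNeighborFinset, mem_filter, mem_univ, true_and]
  rw [compl_commutingGraph_adj, or_comm]

theorem card_centralizerAddSubgroup_eq_card_filter (x : R) :
    Nat.card (centralizerAddSubgroup x) = #(univ.filter fun y => x * y = y * x) := by
  rw [Nat.card_eq_fintype_card, Fintype.card_subtype]
  simp

theorem card_subtype_notMem_center (hz : Set.center R = {0}) {s : Finset R} (hs : 0 ∉ s) :
    #(s.subtype (· ∉ Set.center R)) = #s := by
  rw [card_subtype, filter_true_of_mem]
  rintro x hx
  rw [hz, Set.mem_singleton_iff]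
  exact ne_of_mem_of_not_mem hx hs

theorem card_vertices (hz : Set.center R = {0}) :
    Fintype.card {x : R // x ∉ Set.center R} = Nat.card R - 1 := by
  have : (univ : Finset {x : R // x ∉ Set.center R}) = (univ.erase 0).subtype _ := by
    ext u
    simp [ne_zero_of_notMem_center u.2]
  rw [← card_univ, this, card_subtype_notMem_center hz (notMem_erase 0 univ),
    card_erase_of_mem (mem_univ 0), card_univ, Nat.card_eq_fintype_card]

theorem card_closedNeighborFinset_add_card_centralizerAddSubgroup (hz : Set.center R = {0})
    (v : {x : R // x ∉ Set.center R}) :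
    #((commutingGraph R)ᶜ.closedNeighborFinset v) + Nat.card (centralizerAddSubgroup (v : R)) =
      Nat.card R + 1 := by
  have hN : (commutingGraph R)ᶜ.closedNeighborFinset v =
      (insert (v : R) (univ.filter fun x => ¬ (v : R) * x = x * v)).subtype _ := by
    ext u
    simp [mem_closedNeighborFinset_compl_commutingGraph, Subtype.ext_iff]
  have hsplit := (univ : Finset R).card_filter_add_card_filter_not fun x => (v : R) * x = x * v
  rw [hN, card_subtype_notMem_center hz (by simp [(ne_zero_of_notMem_center v.2).symm]),
    card_insert_of_notMem (by simp), card_centralizerAddSubgroup_eq_card_filter,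
    Nat.card_eq_fintype_card, ← card_univ, ← hsplit]
  omega

end CommutingGraph

section SignedDomination

variable {R : Type*} [NonUnitalRing R] [Fintype R]

theorem signedDominationNumber_le_card_sub_three (hz : Set.center R = {0})
    (x : {x : R // x ∉ Set.center R}) :
    (commutingGraph R)ᶜ.signedDominationNumber ≤ Nat.card R - 3 := by
  have h := (commutingGraph R)ᶜ.signedDominationNumber_le_card_sub_two x fun v => by
    have hN := card_closedNeighborFinset_add_card_centralizerAddSubgroup hz v
    have h2 := two_le_card_centralizerAddSubgroup (ne_zero_of_notMem_center v.2)
    have hle := two_mul_card_centralizerAddSubgroup_le v.2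
    omega
  have h2 := two_le_card_centralizerAddSubgroup (ne_zero_of_notMem_center x.2)
  have hle := two_mul_card_centralizerAddSubgroup_le x.2
  rw [card_vertices hz] at h
  omega

theorem one_le_signedDominationNumber_of_card_eq_four (hz : Set.center R = {0})
    (h4 : Nat.card R = 4) (v : {x : R // x ∉ Set.center R}) :
    1 ≤ (commutingGraph R)ᶜ.signedDominationNumber := by
  refine (commutingGraph R)ᶜ.one_le_signedDominationNumber_of_closedNeighborFinset_eq_univ
    (v := v) (eq_univ_of_card _ ?_)
  have hN := card_closedNeighborFinset_add_card_centralizerAddSubgroup hz v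
  have h2 := two_le_card_centralizerAddSubgroup (ne_zero_of_notMem_center v.2)
  have hle := two_mul_card_centralizerAddSubgroup_le v.2
  rw [card_vertices hz]
  omega

theorem exists_card_eq_three_not_subset_closedNeighborFinset (hz : Set.center R = {0})
    (hcard : Nat.card R = 8) {w : {x : R // x ∉ Set.center R}}
    (hw4 : Nat.card (centralizerAddSubgroup (w : R)) = 4) :
    ∃ S : Finset {x : R // x ∉ Set.center R}, #S = 3 ∧ ∀ v : {x : R // x ∉ Set.center R},
      2 < Nat.card (centralizerAddSubgroup (v : R)) →
        ¬ S ⊆ (commutingGraph R)ᶜ.closedNeighborFinset v := by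
  refine ⟨((univ.filter fun y => (w : R) * y = y * w).erase 0).subtype _, ?_,
    fun v hv hsub => ?_⟩
  · rw [card_subtype_notMem_center hz (notMem_erase 0 _), card_erase_of_mem (by simp),
      ← card_centralizerAddSubgroup_eq_card_filter, hw4]
  obtain ⟨s, hs0, hsw, hsv, hvs⟩ :=
    exists_ne_mul_comm_of_card_centralizerAddSubgroup (ne_zero_of_notMem_center w.2) hcard hw4 hv
  have hs : (⟨s, by rw [hz]; exact hs0⟩ : {x : R // x ∉ Set.center R}) ∈
      (commutingGraph R)ᶜ.closedNeighborFinset v :=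
    hsub (by simp [hs0, hsw])
  rw [mem_closedNeighborFinset_compl_commutingGraph] at hs
  rcases hs with h | h
  · exact hsv (congrArg Subtype.val h)
  · exact h hvs

theorem signedDominationNumber_le_card_sub_seven (hz : Set.center R = {0})
    (h8 : 8 ≤ Nat.card R) :
    (commutingGraph R)ᶜ.signedDominationNumber ≤ Nat.card R - 7 := by
  suffices ∃ S : Finset {x : R // x ∉ Set.center R}, #S = 3 ∧ ∀ v,
      7 ≤ #((commutingGraph R)ᶜ.closedNeighborFinset v) ∨
        5 ≤ #((commutingGraph R)ᶜ.closedNeighborFinset v) ∧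
          ¬ S ⊆ (commutingGraph R)ᶜ.closedNeighborFinset v by
    obtain ⟨S, hS, h⟩ := this
    have := (commutingGraph R)ᶜ.signedDominationNumber_le_of_card_eq_three hS h
    rw [card_vertices hz] at this
    omega
  by_cases hbig : ∀ v : {x : R // x ∉ Set.center R},
      Nat.card (centralizerAddSubgroup (v : R)) + 6 ≤ Nat.card R
  · obtain ⟨S, -, hS⟩ := exists_subset_card_eq (n := 3)
      (s := (univ : Finset {x : R // x ∉ Set.center R}))
      (by rw [card_univ, card_vertices hz]; omega)
    refine ⟨S, hS, fun v => Or.inl ?_⟩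
    have := card_closedNeighborFinset_add_card_centralizerAddSubgroup hz v
    have := hbig v
    omega
  simp only [not_forall, not_le] at hbig
  obtain ⟨w, hw⟩ := hbig
  obtain ⟨h8, hw4⟩ := card_eq_eight_of_lt_card_centralizerAddSubgroup_add_six w.2 h8 hw
  obtain ⟨S, hS, hsub⟩ := exists_card_eq_three_not_subset_closedNeighborFinset hz h8 hw4
  refine ⟨S, hS, fun v => ?_⟩
  have hN := card_closedNeighborFinset_add_card_centralizerAddSubgroup hz v
  have hle := two_mul_card_centralizerAddSubgroup_le v.2
  by_cases hv : Nat.card (centralizerAddSubgroup (v : R)) ≤ 2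
  · left
    omega
  · exact Or.inr ⟨by omega, hsub v (by omega)⟩

end SignedDomination

/-- `γₛ(Γ̄(R)) ∉ {n - 1, n - 5}`. -/
theorem stmt_17 (R : Type*) [NonUnitalRing R] [Fintype R] (n : ℕ)
    (hcard : Fintype.card R = n)
    (hnc : ∃ x y : R, x * y ≠ y * x)
    (hz : Set.center R = {0}) :
    ((commutingGraph R)ᶜ).signedDominationNumber ≠ (n : ℤ) - 1 ∧
      ((commutingGraph R)ᶜ).signedDominationNumber ≠ (n : ℤ) - 5 := by
  obtain ⟨x, y, hxy⟩ := hnc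
  have hx : x ∉ Set.center R := fun h => hxy (Semigroup.mem_center_iff.1 h y).symm
  rw [← hcard, ← Nat.card_eq_fintype_card]
  have h3 := signedDominationNumber_le_card_sub_three hz ⟨x, hx⟩
  refine ⟨by omega, ?_⟩
  rcases card_eq_four_or_eight_le hx with h4 | h8
  · have := one_le_signedDominationNumber_of_card_eq_four hz h4 ⟨x, hx⟩
    omega
  · have := signedDominationNumber_le_card_sub_seven hz h8
    omega
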